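/- Suppose f : ℕ → ℕ → ℕ is such that for all finite-born numeric pregames x and y with g(x) = n and g(y) = m, the birthday of their product is g(x·y) = f(n, m). Then f is symmetric, f(n, m) = f(m, n) for all n, m, and f is strictly increasing in each argument where the other argument is positive: for all n and all m ≥ 1, f(n, m) < f(n+1, m). -/

import Mathlib

universe u

namespace SetTheory

/-- Pre-games, as formerly in Mathlib (`Mathlib.SetTheory.Game.PGame`, removed since). -/
inductive PGame : Type (u + 1)
  | mk : ∀ α β : Type u, (α → PGame) → (β → PGame) → PGame

namespace PGame

/-- The pair (`x ≤ y`, `x ⧏ y`), with the old Mathlib recursive characterisation: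
`x ≤ y ↔ (∀ i, xL i ⧏ y) ∧ ∀ j, x ⧏ yR j` and `x ⧏ y ↔ (∃ i, x ≤ yL i) ∨ ∃ j, xR j ≤ y`. -/
noncomputable def leLF : PGame.{u} → PGame.{u} → Prop × Prop :=
  fun x => @PGame.rec (fun _ => PGame.{u} → Prop × Prop)
    (fun _ _ _ _ IHL IHR y =>
      @PGame.rec (fun _ => Prop × Prop)
        (fun yl yr yL yR IH'L IH'R =>
          ((∀ i, (IHL i (mk yl yr yL yR)).2) ∧ ∀ j, (IH'R j).2,
           (∃ i, (IH'L i).1) ∨ ∃ j, (IHR j (mk yl yr yL yR)).1)) y) x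

instance : LE PGame.{u} := ⟨fun x y => (leLF x y).1⟩

instance : LT PGame.{u} := ⟨fun x y => x ≤ y ∧ (leLF x y).2⟩

/-- Numeric pre-games, as formerly in Mathlib. -/
def Numeric : PGame.{u} → Prop
  | ⟨_, _, L, R⟩ => (∀ i j, L i < R j) ∧ (∀ i, Numeric (L i)) ∧ ∀ j, Numeric (R j)

/-- Birthday of a pre-game, as formerly in Mathlib. -/
noncomputable def birthday : PGame.{u} → Ordinal.{u}
  | ⟨_, _, xL, xR⟩ =>
    max (Ordinal.lsub.{u, u} fun i => birthday (xL i)) (Ordinal.lsub.{u, u} fun i => birthday (xR i))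

/-- Negation, as formerly in Mathlib. -/
def neg : PGame.{u} → PGame.{u}
  | ⟨l, r, L, R⟩ => ⟨r, l, fun i => neg (R i), fun i => neg (L i)⟩

instance : Neg PGame.{u} := ⟨neg⟩

/-- Addition, as formerly in Mathlib. -/
noncomputable instance : Add PGame.{u} :=
  ⟨fun x y => by
    induction x generalizing y with | mk xl xr _ _ IHxl IHxr => _
    induction y with | mk yl yr yL yR IHyl IHyr => _
    have y := mk yl yr yL yR
    refine ⟨xl ⊕ yl, xr ⊕ yr, Sum.rec ?_ ?_, Sum.rec ?_ ?_⟩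
    · exact fun i => IHxl i y
    · exact fun i => IHyl i
    · exact fun i => IHxr i y
    · exact fun i => IHyr i⟩

noncomputable instance : Sub PGame.{u} := ⟨fun x y => x + -y⟩

/-- Multiplication, as formerly in Mathlib. -/
noncomputable instance : Mul PGame.{u} :=
  ⟨fun x y => by
    induction x generalizing y with | mk xl xr _ _ IHxl IHxr => _
    induction y with | mk yl yr yL yR IHyl IHyr => _
    have y := mk yl yr yL yR
    refine ⟨(xl × yl) ⊕ (xr × yr), (xl × yr) ⊕ (xr × yl), ?_, ?_⟩ <;> rintro (⟨i, j⟩ | ⟨i, j⟩)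
    · exact IHxl i y + IHyl j - IHxl i (yL j)
    · exact IHxr i y + IHyr j - IHxr i (yR j)
    · exact IHxl i y + IHyr j - IHxl i (yR j)
    · exact IHxr i y + IHyl j - IHxr i (yL j)⟩

end PGame

end SetTheory

/-!
The integers `n = {n - 1 | }` are numeric with birthday `n`, so `f n m` is the birthday of the
product of the integers `n` and `m`. This product has no options when `n = 0` or `m = 0`, and
otherwise exactly one, the left option `n (m + 1) + (n + 1) m - n m`. Birthdays of finite-born
games add under `+` and are preserved by negation, hence `f 0 m = f n 0 = 0` and
`f (n + 1) (m + 1) = f n (m + 1) + f (n + 1) m + f n m + 1`: a recursion that is symmetric in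
`n, m` and increasing in `n` once `m > 0`.
-/

theorem Ordinal.exists_natCast_of_lt_natCast {o : Ordinal.{u}} {n : ℕ} (h : o < n) :
    ∃ k < n, o = k := by
  obtain ⟨k, rfl⟩ := Ordinal.lt_omega0.1 (h.trans (Ordinal.nat_lt_omega0 n))
  exact ⟨k, by exact_mod_cast h, rfl⟩

namespace SetTheory.PGame

def IsOption (y : PGame.{u}) : PGame.{u} → Prop
  | mk _ _ L R => (∃ i, L i = y) ∨ ∃ j, R j = y

theorem birthday_le_iff {x : PGame.{u}} {o : Ordinal.{u}} :
    x.birthday ≤ o ↔ ∀ y, IsOption y x → y.birthday < o := by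
  cases x
  simp [birthday, IsOption, Ordinal.lsub_le_iff, or_imp, forall_and]

theorem lt_birthday_iff {x : PGame.{u}} {o : Ordinal.{u}} :
    o < x.birthday ↔ ∃ y, IsOption y x ∧ o ≤ y.birthday := by
  cases x
  simp [birthday, IsOption, Ordinal.lt_lsub_iff, or_and_right, exists_or]

theorem IsOption.birthday_lt {x y : PGame.{u}} (h : IsOption y x) : y.birthday < x.birthday :=
  birthday_le_iff.1 le_rfl y h

theorem birthday_eq_succ_of_isOption_iff {x z : PGame.{u}} (h : ∀ y, IsOption y x ↔ y = z) :
    x.birthday = z.birthday + 1 := by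
  refine le_antisymm (birthday_le_iff.2 fun y hy => ?_)
    (Order.add_one_le_of_lt ((h z).2 rfl).birthday_lt)
  rw [(h y).1 hy]
  exact Order.lt_add_one_iff.2 le_rfl

theorem birthday_eq_zero_of_forall_not_isOption {x : PGame.{u}} (h : ∀ y, ¬IsOption y x) :
    x.birthday = 0 :=
  nonpos_iff_eq_zero.1 (birthday_le_iff.2 fun y hy => (h y hy).elim)

theorem exists_isOption_birthday_eq {x : PGame.{u}} {k : ℕ} (h : x.birthday = (k + 1 : ℕ)) :
    ∃ y, IsOption y x ∧ y.birthday = k := by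
  have hk : (k : Ordinal) < x.birthday := by rw [h]; exact_mod_cast k.lt_succ_self
  obtain ⟨y, hy, hky⟩ := lt_birthday_iff.1 hk
  obtain ⟨k', hk', hy'⟩ := Ordinal.exists_natCast_of_lt_natCast (h ▸ hy.birthday_lt)
  rw [hy'] at hky
  have hkk' : k' = k := le_antisymm (Nat.lt_succ_iff.1 hk') (by exact_mod_cast hky)
  exact ⟨y, hy, hkk' ▸ hy'⟩

theorem mk_add_mk {xl xr yl yr : Type u} (xL : xl → PGame.{u}) (xR : xr → PGame.{u})
    (yL : yl → PGame.{u}) (yR : yr → PGame.{u}) :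
    mk xl xr xL xR + mk yl yr yL yR = mk (xl ⊕ yl) (xr ⊕ yr)
      (Sum.elim (fun i => xL i + mk yl yr yL yR) (fun j => mk xl xr xL xR + yL j))
      (Sum.elim (fun i => xR i + mk yl yr yL yR) (fun j => mk xl xr xL xR + yR j)) := rfl

theorem isOption_add_iff {x y z : PGame.{u}} : IsOption z (x + y) ↔
    (∃ x', IsOption x' x ∧ x' + y = z) ∨ ∃ y', IsOption y' y ∧ x + y' = z := by
  cases x; cases y
  rw [mk_add_mk]
  simp only [IsOption, Sum.exists, Sum.elim_inl, Sum.elim_inr, or_and_right, exists_or,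
    exists_exists_eq_and]
  exact or_or_or_comm

theorem birthday_add_natCast {x y : PGame.{u}} {a b : ℕ} (ha : x.birthday = a)
    (hb : y.birthday = b) : (x + y).birthday = (a + b : ℕ) := by
  induction hs : a + b using Nat.strong_induction_on generalizing x y a b with
  | _ s ih =>
  subst hs
  apply le_antisymm
  · refine birthday_le_iff.2 fun z hz => ?_
    rcases isOption_add_iff.1 hz with ⟨x', hx', rfl⟩ | ⟨y', hy', rfl⟩
    · obtain ⟨k, hk, hx'k⟩ := Ordinal.exists_natCast_of_lt_natCast (ha ▸ hx'.birthday_lt)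
      rw [ih (k + b) (by omega) hx'k hb rfl]
      exact_mod_cast (by omega : k + b < a + b)
    · obtain ⟨k, hk, hy'k⟩ := Ordinal.exists_natCast_of_lt_natCast (hb ▸ hy'.birthday_lt)
      rw [ih (a + k) (by omega) ha hy'k rfl]
      exact_mod_cast (by omega : a + k < a + b)
  · rcases a with _ | a
    · rcases b with _ | b
      · simp
      obtain ⟨y', hy', hy'b⟩ := exists_isOption_birthday_eq hb
      have : (x + y').birthday < (x + y).birthday :=
        (isOption_add_iff.2 (Or.inr ⟨y', hy', rfl⟩)).birthday_lt
      rw [ih (0 + b) (by omega) ha hy'b rfl] at this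
      exact Order.add_one_le_of_lt this
    · obtain ⟨x', hx', hx'a⟩ := exists_isOption_birthday_eq ha
      have : (x' + y).birthday < (x + y).birthday :=
        (isOption_add_iff.2 (Or.inl ⟨x', hx', rfl⟩)).birthday_lt
      rw [ih (a + b) (by omega) hx'a hb rfl] at this
      rw [show a + 1 + b = (a + b) + 1 by omega, Nat.cast_succ]
      exact Order.add_one_le_of_lt this

theorem birthday_neg (x : PGame.{u}) : (-x).birthday = x.birthday := by
  induction x with
  | mk l r L R IHL IHR =>
  change (mk r l (fun j => -R j) (fun i => -L i)).birthday = _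
  simp only [birthday, IHL, IHR]
  exact max_comm _ _

theorem birthday_sub_natCast {x y : PGame.{u}} {a b : ℕ} (ha : x.birthday = a)
    (hb : y.birthday = b) : (x - y).birthday = (a + b : ℕ) :=
  birthday_add_natCast ha ((birthday_neg y).trans hb)

/-- The integer `n` in its canonical form `{n - 1 | }`. -/
def nat : ℕ → PGame.{u}
  | 0 => mk PEmpty PEmpty PEmpty.elim PEmpty.elim
  | n + 1 => mk PUnit PEmpty (fun _ => nat n) PEmpty.elim

theorem numeric_nat : ∀ n, (nat.{u} n).Numeric
  | 0 => ⟨fun i => i.elim, fun i => i.elim, fun j => j.elim⟩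
  | n + 1 => ⟨fun _ j => j.elim, fun _ => numeric_nat n, fun j => j.elim⟩

theorem birthday_nat : ∀ n : ℕ, (nat.{u} n).birthday = n
  | 0 => birthday_eq_zero_of_forall_not_isOption (by simp [nat, IsOption])
  | n + 1 => by
    rw [Nat.cast_succ, ← birthday_nat n]
    exact birthday_eq_succ_of_isOption_iff (by simp [nat, IsOption, eq_comm])

theorem birthday_nat_zero_mul (y : PGame.{u}) : (nat 0 * y).birthday = 0 := by
  cases y
  exact birthday_eq_zero_of_forall_not_isOption (by simp [nat, IsOption])

theorem birthday_mul_nat_zero (x : PGame.{u}) : (x * nat 0).birthday = 0 := by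
  cases x
  exact birthday_eq_zero_of_forall_not_isOption (by simp [nat, IsOption])

theorem birthday_nat_succ_mul_nat_succ (n m : ℕ) :
    (nat.{u} (n + 1) * nat (m + 1)).birthday =
      (nat n * nat (m + 1) + nat (n + 1) * nat m - nat n * nat m).birthday + 1 :=
  birthday_eq_succ_of_isOption_iff fun y => by
    constructor
    · rintro (⟨⟨⟨⟩, ⟨⟩⟩ | ⟨⟨⟩, _⟩, rfl⟩ | ⟨⟨⟨⟩, ⟨⟩⟩ | ⟨⟨⟩, _⟩, _⟩)
      rfl
    · rintro rfl
      exact Or.inl ⟨Sum.inl ⟨⟨⟩, ⟨⟩⟩, rfl⟩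

def natMulBirthday : ℕ → ℕ → ℕ
  | 0, _ => 0
  | _ + 1, 0 => 0
  | n + 1, m + 1 =>
    natMulBirthday n (m + 1) + natMulBirthday (n + 1) m + natMulBirthday n m + 1

theorem birthday_nat_mul_nat : ∀ n m : ℕ, (nat.{u} n * nat m).birthday = natMulBirthday n m
  | 0, m => by rw [birthday_nat_zero_mul, natMulBirthday, Nat.cast_zero]
  | n + 1, 0 => by rw [birthday_mul_nat_zero, natMulBirthday, Nat.cast_zero]
  | n + 1, m + 1 => by
    rw [birthday_nat_succ_mul_nat_succ, natMulBirthday, Nat.cast_succ,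
      birthday_sub_natCast (birthday_add_natCast (birthday_nat_mul_nat n (m + 1))
        (birthday_nat_mul_nat (n + 1) m)) (birthday_nat_mul_nat n m)]

theorem natMulBirthday_comm : ∀ n m : ℕ, natMulBirthday n m = natMulBirthday m n
  | 0, 0 => rfl
  | 0, _ + 1 | _ + 1, 0 => by simp only [natMulBirthday]
  | n + 1, m + 1 => by
    simp only [natMulBirthday, natMulBirthday_comm n (m + 1), natMulBirthday_comm (n + 1) m,
      natMulBirthday_comm n m]
    omega

theorem natMulBirthday_lt_succ_left (n : ℕ) {m : ℕ} (hm : 0 < m) :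
    natMulBirthday n m < natMulBirthday (n + 1) m := by
  obtain ⟨m, rfl⟩ := Nat.exists_eq_add_one.2 hm
  rw [natMulBirthday]
  omega

end SetTheory.PGame

open SetTheory PGame Ordinal

theorem mul_birthday_function_symm_and_strictMono (f : ℕ → ℕ → ℕ)
    (hf : ∀ (x y : PGame), x.Numeric → y.Numeric →
      ∀ n m : ℕ, x.birthday = (n : Ordinal) → y.birthday = (m : Ordinal) →
        (x * y).birthday = (f n m : Ordinal)) :
    (∀ n m : ℕ, f n m = f m n) ∧
    (∀ n m : ℕ, 1 ≤ m → f n m < f (n + 1) m) := by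
  obtain rfl : f = natMulBirthday := funext₂ fun n m => by
    have h := hf _ _ (numeric_nat n) (numeric_nat m) n m (birthday_nat n) (birthday_nat m)
    rw [birthday_nat_mul_nat] at h
    exact_mod_cast h.symm
  exact ⟨natMulBirthday_comm, fun n _ hm => natMulBirthday_lt_succ_left n hm⟩
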